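/- For every n ≥ 3, the star with one extra edge S⁺ₙ (obtained from the star K_{1,n−1} by adding one edge between two leaves) has second largest distance eigenvalue less than -1/2. -/

import Mathlib

/-!
If two orthonormal eigenvectors of a symmetric matrix `A` have eigenvalues `≥ c`, every nonzero
vector `x` in their span has `xᵀAx ≥ c·xᵀx`, and that plane meets every hyperplane. So `λ₂(A) < c`
as soon as `xᵀAx < c·xᵀx` on one hyperplane `wᗮ`.

The center of `S⁺ₙ` is adjacent to every other vertex, so its distance matrix is
`D = 2(J - I) - A(S⁺ₙ)`, and with `s = ∑ xᵥ` one gets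
`2xᵀDx + xᵀx = (2s - x₀)² - 3 ∑_{v ≠ 0} xᵥ² - 4x₁x₂`.
On the hyperplane `x₀ = 2s`, i.e. `w = (1, 2, …, 2)`, the right-hand side is at most
`-∑_{v ≠ 0} xᵥ² - 2(x₁ + x₂)²`, which is negative for `x ≠ 0` because `e₀ ∉ wᗮ`.
-/

open Real

/-- The `k`-th largest eigenvalue (1-indexed, with multiplicity) of a real
symmetric matrix; junk value `0` if the matrix is not Hermitian. -/
noncomputable def kthLargestEig {V : Type*} [Fintype V] [DecidableEq V]
    (k : ℕ) (A : Matrix V V ℝ) : ℝ :=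
  if h : A.IsHermitian then
    ((Finset.univ.val.map h.eigenvalues).sort (· ≤ ·)).getD (Fintype.card V - k) 0
  else 0

/-- The second largest eigenvalue of a real symmetric matrix. -/
noncomputable def lambda2 {V : Type*} [Fintype V] [DecidableEq V]
    (A : Matrix V V ℝ) : ℝ := kthLargestEig 2 A

/-- The distance matrix of a graph (entries are graph distances, as reals). -/
noncomputable def distMatrix {V : Type*} [Fintype V] (G : SimpleGraph V) :
    Matrix V V ℝ := fun u v => (G.dist u v : ℝ)

/-- A graph is chordal if every cycle of length at least 4 has a chord, i.e. an
edge of the graph joining two vertices of the cycle that is not a cycle edge. -/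
def SimpleGraph.Chordal {V : Type*} (G : SimpleGraph V) : Prop :=
  ∀ (u : V) (w : G.Walk u u), w.IsCycle → 4 ≤ w.length →
    ∃ x y, x ∈ w.support ∧ y ∈ w.support ∧ G.Adj x y ∧ s(x, y) ∉ w.edges

/-- `S⁺ₙ`: the star `K_{1,n-1}` with center `0` and leaves `1, …, n-1`,
together with the extra edge joining the leaves `1` and `2`. -/
def SplusStar (n : ℕ) : SimpleGraph (Fin n) where
  Adj x y := x ≠ y ∧
    ((x : ℕ) = 0 ∨ (y : ℕ) = 0 ∨ ((x : ℕ) ≤ 2 ∧ (y : ℕ) ≤ 2))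
  symm := by
    constructor
    intro x y h
    exact ⟨h.1.symm, by tauto⟩
  loopless := by
    constructor
    intro x h
    exact h.1 rfl

open Matrix Finset

theorem List.getD_length_sub_two_lt_of_countP_le_one {α : Type*} [LinearOrder α] {l : List α}
    (hl : l.Pairwise (· ≤ ·)) (hlen : 2 ≤ l.length) (d : α) {c : α}
    (hc : l.countP (c ≤ ·) ≤ 1) : l.getD (l.length - 2) d < c := by
  by_contra! hge
  obtain ⟨a, b, hab⟩ := List.length_eq_two.mp
    (show (l.drop (l.length - 2)).length = 2 by rw [List.length_drop]; omega)
  have ha : l.getD (l.length - 2) d = a := by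
    rw [List.getD_eq_getElem _ _ (by omega)]
    exact (List.getElem_drop (j := 0)).symm.trans (List.getElem_of_eq hab (by simp [hab]))
  have hab_le : a ≤ b := by simpa [hab] using hl.drop (i := l.length - 2)
  have hab_count : [a, b].countP (c ≤ ·) = 2 := by simp [ha ▸ hge, (ha ▸ hge).trans hab_le]
  have := (List.drop_sublist (l.length - 2) l).countP_le (p := (c ≤ ·))
  rw [hab, hab_count] at this
  omega

theorem lambda2_lt_of_card_le_one {V : Type*} [Fintype V] [DecidableEq V] {A : Matrix V V ℝ}
    (hA : A.IsHermitian) (hV : 2 ≤ Fintype.card V) {c : ℝ}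
    (hc : #{i | c ≤ hA.eigenvalues i} ≤ 1) : lambda2 A < c := by
  have hlen : ((univ.val.map hA.eigenvalues).sort (· ≤ ·)).length = Fintype.card V := by simp
  rw [lambda2, kthLargestEig, dif_pos hA, ← hlen]
  refine List.getD_length_sub_two_lt_of_countP_le_one (Multiset.pairwise_sort _ _) (by omega) _ ?_
  rw [← Multiset.coe_countP, Multiset.sort_eq, Multiset.countP_map]
  exact hc

theorem Matrix.IsHermitian.card_eigenvalues_ge_le_one {V : Type*} [Fintype V] [DecidableEq V]
    {A : Matrix V V ℝ} (hA : A.IsHermitian) (w : V → ℝ) {c : ℝ}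
    (h : ∀ x, x ≠ 0 → w ⬝ᵥ x = 0 → x ⬝ᵥ (A *ᵥ x) < c * (x ⬝ᵥ x)) :
    #{i | c ≤ hA.eigenvalues i} ≤ 1 := by
  refine card_le_one.mpr fun i hi j hj => by_contra fun hij => ?_
  simp only [mem_filter, mem_univ, true_and] at hi hj
  set u : V → V → ℝ := fun k => ⇑(hA.eigenvectorBasis k)
  have hu : ∀ k l, u k ⬝ᵥ u l = if k = l then 1 else 0 := fun k l => by
    rw [dotProduct_comm, ← star_trivial (u k), ← EuclideanSpace.inner_eq_star_dotProduct]
    exact orthonormal_iff_ite.mp hA.eigenvectorBasis.orthonormal k l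
  have hAu : ∀ k, A *ᵥ u k = hA.eigenvalues k • u k := hA.mulVec_eigenvectorBasis
  obtain ⟨α, β, hαβ, hw⟩ : ∃ α β : ℝ, 0 < α ^ 2 + β ^ 2 ∧
      α * (w ⬝ᵥ u i) + β * (w ⬝ᵥ u j) = 0 := by
    by_cases hi0 : w ⬝ᵥ u i = 0
    · exact ⟨1, 0, by norm_num, by simp [hi0]⟩
    · exact ⟨w ⬝ᵥ u j, -(w ⬝ᵥ u i), by positivity [neg_ne_zero.mpr hi0], by ring⟩
  set x := α • u i + β • u j
  have hxx : x ⬝ᵥ x = α ^ 2 + β ^ 2 := by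
    simp only [x, dotProduct_add, add_dotProduct, dotProduct_smul, smul_dotProduct, hu, if_pos,
      if_neg hij, if_neg (Ne.symm hij), smul_eq_mul]
    ring
  have hAx : x ⬝ᵥ (A *ᵥ x) = α ^ 2 * hA.eigenvalues i + β ^ 2 * hA.eigenvalues j := by
    simp only [x, mulVec_add, mulVec_smul, hAu, dotProduct_add, add_dotProduct, dotProduct_smul,
      smul_dotProduct, hu, if_pos, if_neg hij, if_neg (Ne.symm hij), smul_eq_mul]
    ring
  have hx0 : x ≠ 0 := fun hx => by simp only [hx, dotProduct_zero] at hxx; linarith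
  have := h x hx0 (by simp [x, dotProduct_add, hw])
  rw [hAx, hxx] at this
  nlinarith

theorem SimpleGraph.dist_eq_two_of_adj_of_adj {V : Type*} {G : SimpleGraph V} {u v c : V}
    (huv : u ≠ v) (h : ¬G.Adj u v) (hu : G.Adj u c) (hv : G.Adj c v) : G.dist u v = 2 := by
  let p : G.Walk u v := .cons hu (.cons hv .nil)
  have h0 : G.dist u v ≠ 0 := fun h0 => huv ((Reachable.dist_eq_zero_iff ⟨p⟩).mp h0)
  have h1 : G.dist u v ≠ 1 := fun h1 => h (dist_eq_one_iff_adj.mp h1)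
  have h2 : G.dist u v ≤ 2 := dist_le p
  omega

theorem distMatrix_eq_of_forall_adj {V : Type*} [Fintype V] [DecidableEq V] {G : SimpleGraph V}
    [DecidableRel G.Adj] {c : V} (hc : ∀ v, v ≠ c → G.Adj c v) :
    distMatrix G = (2 : ℝ) • (vecMulVec 1 1 - 1) - G.adjMatrix ℝ := by
  ext u v
  by_cases huv : u = v
  · simp [huv, distMatrix]
  by_cases hadj : G.Adj u v
  · norm_num [distMatrix, huv, hadj, SimpleGraph.dist_eq_one_iff_adj.mpr hadj]
  have hu : u ≠ c := by rintro rfl; exact hadj (hc v (Ne.symm huv))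
  have hv : v ≠ c := by rintro rfl; exact hadj (hc u huv).symm
  simp [distMatrix, huv, hadj,
    SimpleGraph.dist_eq_two_of_adj_of_adj huv hadj (hc u hu).symm (hc v hv)]

theorem isHermitian_distMatrix {V : Type*} [Fintype V] (G : SimpleGraph V) :
    (distMatrix G).IsHermitian := by
  ext u v
  simp [distMatrix, SimpleGraph.dist_comm]

theorem sum_sq_le_dotProduct_self {V : Type*} [Fintype V] (x : V → ℝ) (s : Finset V) :
    ∑ i ∈ s, x i ^ 2 ≤ x ⬝ᵥ x := by
  simpa only [dotProduct, sq] using sum_le_univ_sum_of_nonneg fun i => mul_self_nonneg (x i)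

instance (n : ℕ) : DecidableRel (SplusStar n).Adj :=
  fun _ _ => inferInstanceAs (Decidable (_ ∧ _))

namespace SplusStar

variable {m : ℕ}

theorem zero_adj {v : Fin (m + 3)} (hv : v ≠ 0) : (SplusStar (m + 3)).Adj 0 v :=
  ⟨hv.symm, Or.inl rfl⟩

theorem adjMatrix_eq :
    (SplusStar (m + 3)).adjMatrix ℝ =
      vecMulVec (Pi.single 0 1) 1 + vecMulVec 1 (Pi.single 0 1)
        - 2 • vecMulVec (Pi.single 0 1) (Pi.single 0 1)
        + vecMulVec (Pi.single 1 1) (Pi.single 2 1)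
        + vecMulVec (Pi.single 2 1) (Pi.single 1 1) := by
  have h2 : 2 % (m + 3) = 2 := Nat.mod_eq_of_lt (by omega)
  ext ⟨_ | _ | _ | a, ha⟩ ⟨_ | _ | _ | b, hb⟩ <;>
    simp only [SimpleGraph.adjMatrix_apply, Matrix.add_apply, Matrix.sub_apply,
      Matrix.smul_apply, vecMulVec_apply, Pi.single_apply, Pi.one_apply, Fin.ext_iff] <;>
    simp [SplusStar, h2, one_add_one_eq_two]

theorem dotProduct_distMatrix_mulVec (x : Fin (m + 3) → ℝ) :
    x ⬝ᵥ (distMatrix (SplusStar (m + 3)) *ᵥ x) =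
      2 * ((∑ i, x i) ^ 2 - x ⬝ᵥ x) - 2 * x 0 * ∑ i, x i + 2 * x 0 ^ 2 - 2 * x 1 * x 2 := by
  rw [distMatrix_eq_of_forall_adj (fun _ => zero_adj), adjMatrix_eq]
  simp only [sub_mulVec, add_mulVec, smul_mulVec, one_mulVec, vecMulVec_mulVec, op_smul_eq_smul,
    dotProduct_add, dotProduct_sub, dotProduct_smul, smul_eq_mul, one_dotProduct, dotProduct_one,
    dotProduct_single_one, single_one_dotProduct]
  ring

theorem dotProduct_distMatrix_mulVec_lt {x : Fin (m + 3) → ℝ} (hx : x ≠ 0)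
    (hw : 2 * ∑ i, x i = x 0) :
    x ⬝ᵥ (distMatrix (SplusStar (m + 3)) *ᵥ x) < -1 / 2 * (x ⬝ᵥ x) := by
  have hid : 2 * (x ⬝ᵥ (distMatrix (SplusStar (m + 3)) *ᵥ x)) + x ⬝ᵥ x =
      (2 * ∑ i, x i - x 0) ^ 2 - 3 * (x ⬝ᵥ x - x 0 ^ 2) - 4 * x 1 * x 2 := by
    rw [dotProduct_distMatrix_mulVec]; ring
  have h2 : 2 % (m + 3) = 2 := Nat.mod_eq_of_lt (by omega)
  have h012 : x 0 ^ 2 + x 1 ^ 2 + x 2 ^ 2 ≤ x ⬝ᵥ x := by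
    have := sum_sq_le_dotProduct_self x {0, 1, 2}
    rwa [sum_insert (by simp [Fin.ext_iff, h2]), sum_pair (by simp [Fin.ext_iff, h2]),
      ← add_assoc] at this
  have hpos : x 0 ^ 2 < x ⬝ᵥ x := by
    by_contra! hle
    have hv : ∀ v, v ≠ 0 → x v = 0 := fun v hv => by
      have := sum_sq_le_dotProduct_self x {0, v}
      rw [sum_pair hv.symm] at this
      exact pow_eq_zero_iff two_ne_zero |>.mp (by nlinarith [sq_nonneg (x v)])
    have hsum : ∑ i, x i = x 0 := sum_eq_single 0 (fun v _ => hv v) (by simp)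
    refine hx (funext fun v => ?_)
    rcases eq_or_ne v 0 with rfl | h
    · exact (by linarith : x 0 = 0)
    · exact hv v h
  rw [hw, sub_self] at hid
  nlinarith [sq_nonneg (x 1 + x 2)]

end SplusStar

theorem lambda2_Splus (n : ℕ) (hn : 3 ≤ n) :
    lambda2 (distMatrix (SplusStar n)) < -1/2 := by
  obtain ⟨m, rfl⟩ := Nat.exists_eq_add_of_le' hn
  have hD := isHermitian_distMatrix (SplusStar (m + 3))
  refine lambda2_lt_of_card_le_one hD (by simp) ?_
  refine hD.card_eigenvalues_ge_le_one ((2 : ℝ) • 1 - Pi.single 0 1) fun x hx hw => ?_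
  refine SplusStar.dotProduct_distMatrix_mulVec_lt hx ?_
  simp only [sub_dotProduct, smul_dotProduct, one_dotProduct, single_one_dotProduct,
    smul_eq_mul] at hw
  linarith
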